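/- Path decomposition for saturated automata over singleton word languages: let w = w₁…w_n ∈ T* and let A_w be the (n+1)-state automaton with states q₀,…,q_n and transitions (q_{i-1}, w_i, q_i) accepting exactly {w}. In the saturated automaton A_pre*, a transition (q_i, A, q_j) with A ∈ V exists only if i ≤ j and A ⇒* w_{i+1}…w_j. -/
import Mathlib


/-- Symbols of a grammar: variables `V` or terminals `T`. -/
abbrev GSym (V T : Type) := V ⊕ T

/-- A context-free grammar: a set of productions and a start variable. -/
structure CFG (V T : Type) where
  P : Set (V × List (GSym V T))
  S : V

/-- One-step derivation: apply a production in an arbitrary context. -/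
def CFG.DStep {V T : Type} (G : CFG V T) (x y : List (GSym V T)) : Prop :=
  ∃ (α γ : List (GSym V T)) (A : V) (β : List (GSym V T)),
    (A, β) ∈ G.P ∧ x = α ++ Sum.inl A :: γ ∧ y = α ++ β ++ γ

/-- `⇒*`: reflexive-transitive closure of one-step derivation. -/
def CFG.Derives {V T : Type} (G : CFG V T) : List (GSym V T) → List (GSym V T) → Prop :=
  Relation.ReflTransGen G.DStep

/-- `pre*(L)`: the set of predecessors of `L`. -/
def CFG.preStar {V T : Type} (G : CFG V T) (L : Set (List (GSym V T))) :
    Set (List (GSym V T)) :=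
  {α | ∃ β ∈ L, G.Derives α β}

/-- Path relation of a nondeterministic automaton given by transitions `δ`. -/
inductive NPath {V T Q : Type} (δ : Set (Q × GSym V T × Q)) : Q → List (GSym V T) → Q → Prop
  | nil (q : Q) : NPath δ q [] q
  | cons {q q'' q' : Q} {a : GSym V T} {w : List (GSym V T)} :
      (q, a, q'') ∈ δ → NPath δ q'' w q' → NPath δ q (a :: w) q'

/-- Language accepted from initial state `q₀` with final states `F`. -/
def NAccepts {V T Q : Type} (δ : Set (Q × GSym V T × Q)) (q₀ : Q) (F : Set Q) :
    Set (List (GSym V T)) :=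
  {w | ∃ qf ∈ F, NPath δ q₀ w qf}

/-- `δ` is closed under the saturation rule for grammar `G`. -/
def SatClosed {V T Q : Type} (G : CFG V T) (δ : Set (Q × GSym V T × Q)) : Prop :=
  ∀ (A : V) (β : List (GSym V T)) (q q' : Q),
    (A, β) ∈ G.P → NPath δ q β q' → (q, Sum.inl A, q') ∈ δ

/-- One application of the saturation rule. -/
def SatStep {V T Q : Type} (G : CFG V T) (δ₁ δ₂ : Set (Q × GSym V T × Q)) : Prop :=
  ∃ (A : V) (β : List (GSym V T)) (q q' : Q),
    (A, β) ∈ G.P ∧ NPath δ₁ q β q' ∧ δ₂ = insert (q, Sum.inl A, q') δ₁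

/-- The saturated transition relation: smallest superset of `δ` closed under
the saturation rule (given as the intersection of all closed supersets). -/
def satClosure {V T Q : Type} (G : CFG V T) (δ : Set (Q × GSym V T × Q)) :
    Set (Q × GSym V T × Q) :=
  ⋂₀ {δ' | δ ⊆ δ' ∧ SatClosed G δ'}

/-- The linear automaton accepting exactly `{w}`: states `q₀,…,q_n` (as `Fin (n+1)`)
and transitions `(q_{i-1}, wᵢ, q_i)`. -/
def linAuto {V T : Type} (w : List T) :
    Set (Fin (w.length + 1) × GSym V T × Fin (w.length + 1)) :=
  {t | ∃ i : Fin w.length, t = (i.castSucc, Sum.inr (w.get i), i.succ)}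

lemma CFG.DStep.append {V T : Type} {G : CFG V T} {x y : List (GSym V T)}
    (u v : List (GSym V T)) (h : G.DStep x y) : G.DStep (u ++ x ++ v) (u ++ y ++ v) := by
  obtain ⟨α, γ, A, β, hP, hx, hy⟩ := h
  exact ⟨u ++ α, γ ++ v, A, β, hP, by simp [hx], by simp [hy]⟩

lemma CFG.Derives.append {V T : Type} {G : CFG V T} {x y x' y' : List (GSym V T)}
    (h1 : G.Derives x x') (h2 : G.Derives y y') : G.Derives (x ++ y) (x' ++ y') := by
  have ha : G.Derives (x ++ y) (x' ++ y) := by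
    induction h1 with
    | refl => exact Relation.ReflTransGen.refl
    | tail _ hstep ih =>
      exact ih.tail (by simpa using hstep.append [] y)
  have hb : G.Derives (x' ++ y) (x' ++ y') := by
    induction h2 with
    | refl => exact Relation.ReflTransGen.refl
    | tail _ hstep ih =>
      exact ih.tail (by simpa using hstep.append x' [])
  exact ha.trans hb

/-- Segment of `w` from index `i` (length `j - i`), mapped into symbols. -/
def seg {V T : Type} (w : List T) (i j : ℕ) : List (GSym V T) :=
  ((w.drop i).take (j - i)).map Sum.inr

lemma seg_split {V T : Type} (w : List T) {i k j : ℕ} (h1 : i ≤ k) (h2 : k ≤ j) :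
    seg (V := V) (T := T) w i j = seg w i k ++ seg w k j := by
  unfold seg
  rw [← List.map_append]
  congr 1
  have hd : w.drop k = (w.drop i).drop (k - i) := by
    rw [List.drop_drop]
    congr 1
    omega
  rw [hd, ← List.take_add]
  congr 1
  omega

/-- The invariant set of transitions. -/
def Good {V T : Type} (G : CFG V T) (w : List T) :
    Set (Fin (w.length + 1) × GSym V T × Fin (w.length + 1)) :=
  {t | (t.1 : ℕ) ≤ (t.2.2 : ℕ) ∧ G.Derives [t.2.1] (seg w t.1 t.2.2)}

lemma linAuto_subset_Good {V T : Type} (G : CFG V T) (w : List T) :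
    linAuto (V := V) w ⊆ Good G w := by
  rintro t ⟨i, rfl⟩
  constructor
  · simp
  · have hlt : (i : ℕ) < w.length := i.isLt
    have : seg (V := V) w i.castSucc i.succ = [Sum.inr (w.get i)] := by
      unfold seg
      have : ((i.succ : Fin (w.length + 1)) : ℕ) - ((i.castSucc : Fin (w.length+1)) : ℕ) = 1 := by
        simp
      rw [this]
      have hc : ((i.castSucc : Fin (w.length + 1)) : ℕ) = (i : ℕ) := rfl
      rw [hc]
      rw [List.take_one_drop_eq_of_lt_length (by simp [hlt])]
      simp
    rw [this]
    exact Relation.ReflTransGen.refl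

lemma NPath_Good {V T : Type} (G : CFG V T) (w : List T)
    {q q' : Fin (w.length + 1)} {β : List (GSym V T)}
    (h : NPath (Good G w) q β q') :
    (q : ℕ) ≤ (q' : ℕ) ∧ G.Derives β (seg w q q') := by
  induction h with
  | nil q =>
    refine ⟨le_refl _, ?_⟩
    simp only [seg, Nat.sub_self, List.take_zero, List.map_nil]
    exact Relation.ReflTransGen.refl
  | @cons q q'' q' a v hmem _ ih =>
    obtain ⟨h1, h2⟩ := hmem
    obtain ⟨h3, h4⟩ := ih
    refine ⟨h1.trans h3, ?_⟩
    rw [seg_split w h1 h3]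
    exact CFG.Derives.append (x := [a]) h2 h4

lemma Good_satClosed {V T : Type} (G : CFG V T) (w : List T) :
    SatClosed G (Good G w) := by
  intro A β q q' hP hpath
  obtain ⟨h1, h2⟩ := NPath_Good G w hpath
  refine ⟨h1, ?_⟩
  exact (Relation.ReflTransGen.single ⟨[], [], A, β, hP, rfl, by simp⟩).trans h2

theorem satClosure_linAuto_decomposition {V T : Type} (G : CFG V T) (w : List T)
    (i j : Fin (w.length + 1)) (A : V)
    (h : (i, Sum.inl A, j) ∈ satClosure G (linAuto w)) :
    (i : ℕ) ≤ (j : ℕ) ∧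
      G.Derives [Sum.inl A] (((w.drop i).take ((j : ℕ) - (i : ℕ))).map Sum.inr) := by
  have hsub : satClosure G (linAuto w) ⊆ Good G w :=
    Set.sInter_subset_of_mem ⟨linAuto_subset_Good G w, Good_satClosed G w⟩
  exact hsub h
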